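/- In the inverse braid monoid IB_n, an element m satisfies ε_i m = ε_i if and only if m ε_{τ(m)(i)} = ε_{τ(m)(i)}, where τ : IB_n → I_n is the canonical projection to the symmetric inverse monoid. -/

import Mathlib

/-- Generators of the inverse braid monoid on `n` strands: `s i` is the Artin
generator `σ_{i+1}` (0-based `i`), `si i` is its formal inverse, and `e a` is the
idempotent `ε_{a+1}` (the trivial partial braid with the `(a+1)`-st string removed). -/
inductive IBGen (n : ℕ) : Type
  | s (i : Fin (n - 1))
  | si (i : Fin (n - 1))
  | e (a : Fin n)

/-- The defining relations of the inverse braid monoid `IB_n`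
(braid relations, invertibility of the `σ_i`, and the Easdown–Lavers/Gilbert
relations between the `ε` and the `σ`). Indices: the generator `s i` crosses the
(0-based) strands `i` and `i+1`; `e a` deletes the (0-based) strand `a`. -/
inductive ibRel (n : ℕ) : FreeMonoid (IBGen n) → FreeMonoid (IBGen n) → Prop
  | braid_comm (i j : Fin (n - 1)) (h : (i : ℕ) + 1 < (j : ℕ)) :
      ibRel n (.of (.s i) * .of (.s j)) (.of (.s j) * .of (.s i))
  | braid (i j : Fin (n - 1)) (h : (i : ℕ) + 1 = (j : ℕ)) :
      ibRel n (.of (.s i) * .of (.s j) * .of (.s i)) (.of (.s j) * .of (.s i) * .of (.s j))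
  | inv_right (i : Fin (n - 1)) : ibRel n (.of (.s i) * .of (.si i)) 1
  | inv_left (i : Fin (n - 1)) : ibRel n (.of (.si i) * .of (.s i)) 1
  | e_comm (a : Fin n) (i : Fin (n - 1)) (h : (i : ℕ) + 2 ≤ (a : ℕ) ∨ (a : ℕ) + 2 ≤ (i : ℕ)) :
      ibRel n (.of (.e a) * .of (.s i)) (.of (.s i) * .of (.e a))
  | e_s (i : Fin (n - 1)) (a b : Fin n) (ha : (a : ℕ) = (i : ℕ)) (hb : (b : ℕ) = (i : ℕ) + 1) :
      ibRel n (.of (.e a) * .of (.s i)) (.of (.s i) * .of (.e b))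
  | e_s' (i : Fin (n - 1)) (a b : Fin n) (ha : (a : ℕ) = (i : ℕ)) (hb : (b : ℕ) = (i : ℕ) + 1) :
      ibRel n (.of (.e b) * .of (.s i)) (.of (.s i) * .of (.e a))
  | idem (a : Fin n) : ibRel n (.of (.e a) * .of (.e a)) (.of (.e a))
  | e_ss (i : Fin (n - 1)) (b : Fin n) (hb : (b : ℕ) = (i : ℕ) + 1) :
      ibRel n (.of (.e b) * .of (.s i) * .of (.s i)) (.of (.e b))
  | ss_e (i : Fin (n - 1)) (b : Fin n) (hb : (b : ℕ) = (i : ℕ) + 1) :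
      ibRel n (.of (.s i) * .of (.s i) * .of (.e b)) (.of (.e b))
  | ee_s (i : Fin (n - 1)) (a b : Fin n) (ha : (a : ℕ) = (i : ℕ)) (hb : (b : ℕ) = (i : ℕ) + 1) :
      ibRel n (.of (.e a) * .of (.e b) * .of (.s i)) (.of (.e a) * .of (.e b))
  | s_ee (i : Fin (n - 1)) (a b : Fin n) (ha : (a : ℕ) = (i : ℕ)) (hb : (b : ℕ) = (i : ℕ) + 1) :
      ibRel n (.of (.s i) * .of (.e a) * .of (.e b)) (.of (.e a) * .of (.e b))

/-- The congruence on the free monoid generated by the defining relations of `IB_n`. -/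
def ibCon (n : ℕ) : Con (FreeMonoid (IBGen n)) := conGen (ibRel n)

/-- The inverse braid monoid `IB_n` of partial braids on `n` strands,
given by the Easdown–Lavers/Gilbert presentation. -/
def IB (n : ℕ) : Type := (ibCon n).Quotient

instance (n : ℕ) : Monoid (IB n) := by unfold IB; infer_instance

/-- The generator `σ_{i+1}` (0-based `i`) of `IB_n`. -/
def ibS (n : ℕ) (i : Fin (n - 1)) : IB n := (ibCon n).mk' (.of (.s i))

/-- The inverse generator `σ_{i+1}^{-1}` (0-based `i`) of `IB_n`. -/
def ibSi (n : ℕ) (i : Fin (n - 1)) : IB n := (ibCon n).mk' (.of (.si i))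

/-- The idempotent generator `ε_{a+1}` (0-based `a`) of `IB_n`. -/
def ibE (n : ℕ) (a : Fin n) : IB n := (ibCon n).mk' (.of (.e a))
/-- A partial injective map on `Fin n`: `toFun i = some j` means `i ↦ j`,
`toFun i = none` means that the map is undefined at `i`. -/
@[ext]
structure PartialInj (n : ℕ) : Type where
  toFun : Fin n → Option (Fin n)
  inj : ∀ i j a, toFun i = some a → toFun j = some a → i = j

/-- The symmetric inverse monoid `I_n`: partial injections of `Fin n` under
composition, `(p * q) i = p (q i)` (defined where it makes sense). -/
instance (n : ℕ) : Monoid (PartialInj n) where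
  mul p q := ⟨fun i => (q.toFun i).bind p.toFun, by
    intro i j a hi hj
    rcases Option.bind_eq_some_iff.mp hi with ⟨b, hb, hpb⟩
    rcases Option.bind_eq_some_iff.mp hj with ⟨c, hc, hpc⟩
    have hbc : b = c := p.inj _ _ _ hpb hpc
    subst hbc
    exact q.inj _ _ _ hb hc⟩
  one := ⟨fun i => some i, fun i j a hi hj => by
    simp only [Option.some.injEq] at hi hj; omega⟩
  mul_assoc p q r := by
    apply PartialInj.ext
    funext i
    show (r.toFun i).bind (fun x => (q.toFun x).bind p.toFun) =
      ((r.toFun i).bind q.toFun).bind p.toFun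
    exact (Option.bind_assoc _ _ _).symm
  one_mul p := by
    apply PartialInj.ext
    funext i
    show (p.toFun i).bind (fun j => some j) = p.toFun i
    cases p.toFun i <;> rfl
  mul_one p := by
    apply PartialInj.ext
    funext i
    show (some i).bind p.toFun = p.toFun i
    rfl

/-- The (total) partial injection underlying the braid generator `σ_{i+1}`:
the transposition of `i` and `i+1` (0-based). -/
def swapPerm (n : ℕ) (i : Fin (n - 1)) : Equiv.Perm (Fin n) :=
  Equiv.swap ⟨(i : ℕ), by have := i.isLt; omega⟩ ⟨(i : ℕ) + 1, by have := i.isLt; omega⟩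

def swapPI (n : ℕ) (i : Fin (n - 1)) : PartialInj n :=
  ⟨fun x => some (swapPerm n i x), by
    intro x y a hx hy
    try dsimp only at hx hy
    exact (swapPerm n i).injective
      ((Option.some.inj hx).trans (Option.some.inj hy).symm)⟩

/-- The partial injection underlying `ε_{a+1}`: the identity, undefined at `a`
(0-based). -/
def dropPI (n : ℕ) (a : Fin n) : PartialInj n :=
  ⟨fun x => if x = a then none else some x, by
    intro x y c hx hy
    try dsimp only at hx hy
    split_ifs at hx hy <;> simp_all⟩

/-- The domain of a partial injection. -/
def piDom (n : ℕ) (p : PartialInj n) : Finset (Fin n) :=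
  Finset.univ.filter fun i => (p.toFun i).isSome

/-- The range (image) of a partial injection. -/
def piRan (n : ℕ) (p : PartialInj n) : Finset (Fin n) :=
  Finset.univ.filter fun j => ∃ i, p.toFun i = some j

/-!
The key fact is that `m ε_a = ε_b m` whenever `τ(m)(a) = b`. This is multiplicative in `m`, so it
suffices to check it on generators, where it follows from the defining relations once one has
derived that the `ε_a` commute with each other and that `ε_a` commutes with `σ_i` for every
`a ∉ {i, i + 1}`. On the other hand, applying `τ` to `ε_i m = ε_i` (or to `m ε_j = ε_j`) forces
`j = i`, and then both sides of the equivalence say `m ε_i = ε_i m = ε_i`.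
-/

theorem Commute.of_semiconjBy_units {M : Type*} [Monoid M] {u : Mˣ} {x y x' y' : M}
    (hx : SemiconjBy (u : M) x x') (hy : SemiconjBy (u : M) y y') (h : Commute x y) :
    Commute x' y' := by
  have hxy := (hx.mul_right hy).eq
  have hyx := (hy.mul_right hx).eq
  rw [← h.eq, hxy] at hyx
  exact (Units.mul_left_inj u).mp hyx

section PartialInj

variable {n : ℕ}

theorem PartialInj.one_toFun (i : Fin n) : (1 : PartialInj n).toFun i = some i := rfl

theorem PartialInj.mul_toFun (p q : PartialInj n) (i : Fin n) :
    (p * q).toFun i = (q.toFun i).bind p.toFun := rfl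

theorem swapPI_toFun (i : Fin (n - 1)) (c : Fin n) :
    (swapPI n i).toFun c = some (swapPerm n i c) := rfl

theorem dropPI_toFun_eq_some {a b c : Fin n} :
    (dropPI n a).toFun c = some b ↔ c ≠ a ∧ c = b := by
  simp [dropPI]

theorem eq_of_dropPI_mul_eq {p : PartialInj n} {i j : Fin n} (h : dropPI n i * p = dropPI n i)
    (hij : p.toFun i = some j) : j = i := by
  have hi := congrArg (fun q => q.toFun i) h
  simp only [PartialInj.mul_toFun, hij, Option.bind_some, dropPI] at hi
  simpa using hi

theorem eq_of_mul_dropPI_eq {p : PartialInj n} {i j : Fin n} (h : p * dropPI n j = dropPI n j)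
    (hij : p.toFun i = some j) : i = j := by
  by_contra hne
  have hi := congrArg (fun q => q.toFun i) h
  simp only [PartialInj.mul_toFun, dropPI, if_neg hne, Option.bind_some, hij] at hi
  exact hne (Option.some.inj hi).symm

end PartialInj

namespace IB

variable {n : ℕ}

def gen (g : IBGen n) : IB n := (ibCon n).mk' (.of g)

theorem induction_on {p : IB n → Prop} (m : IB n) (one : p 1)
    (gen_mul : ∀ g m, p m → p (gen g * m)) : p m := by
  induction m using Con.induction_on with
  | H w =>
    induction w using FreeMonoid.inductionOn' with
    | one => exact one
    | of_mul g w ih => exact gen_mul g _ ih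

theorem mk'_eq_of_ibRel {x y : FreeMonoid (IBGen n)} (h : ibRel n x y) :
    (ibCon n).mk' x = (ibCon n).mk' y :=
  (Con.eq _).mpr (ConGen.Rel.of _ _ h)

theorem s_mul_si (i : Fin (n - 1)) : ibS n i * ibSi n i = 1 :=
  mk'_eq_of_ibRel (.inv_right i)

theorem si_mul_s (i : Fin (n - 1)) : ibSi n i * ibS n i = 1 :=
  mk'_eq_of_ibRel (.inv_left i)

def sUnit (i : Fin (n - 1)) : (IB n)ˣ := ⟨ibS n i, ibSi n i, s_mul_si i, si_mul_s i⟩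

theorem braid (i j : Fin (n - 1)) (h : (i : ℕ) + 1 = j) :
    ibS n i * ibS n j * ibS n i = ibS n j * ibS n i * ibS n j :=
  mk'_eq_of_ibRel (.braid i j h)

theorem commute_e_s_of_far (a : Fin n) (i : Fin (n - 1))
    (h : (i : ℕ) + 2 ≤ a ∨ (a : ℕ) + 2 ≤ i) : Commute (ibE n a) (ibS n i) :=
  mk'_eq_of_ibRel (.e_comm a i h)

theorem semiconjBy_s_e_upper (i : Fin (n - 1)) (a b : Fin n) (ha : (a : ℕ) = i)
    (hb : (b : ℕ) = i + 1) : SemiconjBy (ibS n i) (ibE n b) (ibE n a) :=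
  (mk'_eq_of_ibRel (.e_s i a b ha hb)).symm

theorem semiconjBy_s_e_lower (i : Fin (n - 1)) (a b : Fin n) (ha : (a : ℕ) = i)
    (hb : (b : ℕ) = i + 1) : SemiconjBy (ibS n i) (ibE n a) (ibE n b) :=
  (mk'_eq_of_ibRel (.e_s' i a b ha hb)).symm

theorem e_mul_e_mul_s (i : Fin (n - 1)) (a b : Fin n) (ha : (a : ℕ) = i)
    (hb : (b : ℕ) = i + 1) : ibE n a * ibE n b * ibS n i = ibE n a * ibE n b :=
  mk'_eq_of_ibRel (.ee_s i a b ha hb)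

theorem s_mul_e_mul_e (i : Fin (n - 1)) (a b : Fin n) (ha : (a : ℕ) = i)
    (hb : (b : ℕ) = i + 1) : ibS n i * ibE n a * ibE n b = ibE n a * ibE n b :=
  mk'_eq_of_ibRel (.s_ee i a b ha hb)

theorem commute_e_e_succ (i : Fin (n - 1)) (a b : Fin n) (ha : (a : ℕ) = i)
    (hb : (b : ℕ) = i + 1) : Commute (ibE n a) (ibE n b) := by
  have hconj :=
    ((semiconjBy_s_e_lower i a b ha hb).mul_right (semiconjBy_s_e_upper i a b ha hb)).eq
  rw [← mul_assoc, s_mul_e_mul_e i a b ha hb] at hconj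
  symm
  calc ibE n b * ibE n a = ibE n b * ibE n a * ibS n i * ibSi n i := by
        rw [mul_assoc _ (ibS n i), s_mul_si, mul_one]
    _ = ibE n a * ibE n b * ibS n i * ibSi n i := by rw [← hconj, e_mul_e_mul_s i a b ha hb]
    _ = ibE n a * ibE n b := by rw [mul_assoc _ (ibS n i), s_mul_si, mul_one]

theorem commute_e_s_of_ne (a : Fin n) (i : Fin (n - 1)) (h₁ : (a : ℕ) ≠ i)
    (h₂ : (a : ℕ) ≠ i + 1) : Commute (ibE n a) (ibS n i) := by
  by_cases hfar : (i : ℕ) + 2 ≤ a ∨ (a : ℕ) + 2 ≤ i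
  · exact commute_e_s_of_far a i hfar
  -- Here `a + 1 = i`: conjugating by `σ_a σ_i` carries `ε_{i+1}` to `ε_a` and `σ_a` to `σ_i`,
  -- and `ε_{i+1}` commutes with `σ_a` by the far relation.
  have := i.isLt
  let i' : Fin (n - 1) := ⟨a, by omega⟩
  let c : Fin n := ⟨i, by omega⟩
  let d : Fin n := ⟨i + 1, by omega⟩
  have hε : SemiconjBy (ibS n i' * ibS n i) (ibE n d) (ibE n a) :=
    (semiconjBy_s_e_upper i' a c rfl (by simp [c, i']; omega)).mul_left
      (semiconjBy_s_e_upper i c d rfl rfl)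
  have hσ : SemiconjBy (ibS n i' * ibS n i) (ibS n i') (ibS n i) := by
    simpa only [SemiconjBy, mul_assoc] using braid i' i (by simp [i']; omega)
  exact Commute.of_semiconjBy_units (u := sUnit i' * sUnit i) hε hσ
    (commute_e_s_of_far d i' (Or.inl (by simp [d, i']; omega)))

theorem semiconjBy_s_e (i : Fin (n - 1)) (c : Fin n) :
    SemiconjBy (ibS n i) (ibE n c) (ibE n (swapPerm n i c)) := by
  have := i.isLt
  rw [swapPerm, Equiv.swap_apply_def]
  split_ifs with h₁ h₂
  · exact semiconjBy_s_e_lower i c _ (by simp [h₁]) rfl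
  · exact semiconjBy_s_e_upper i _ c rfl (by simp [h₂])
  · exact (commute_e_s_of_ne c i (fun h => h₁ (Fin.ext h)) (fun h => h₂ (Fin.ext h))).symm

theorem semiconjBy_si_e (i : Fin (n - 1)) (c : Fin n) :
    SemiconjBy (ibSi n i) (ibE n c) (ibE n (swapPerm n i c)) := by
  have h := semiconjBy_s_e i (swapPerm n i c)
  rw [swapPerm, Equiv.swap_apply_self] at h
  exact SemiconjBy.units_inv_symm_left (a := sUnit i) h

theorem commute_e_e_of_val_eq_add (k : ℕ) (a c : Fin n) (hc : (c : ℕ) = a + 1 + k) :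
    Commute (ibE n a) (ibE n c) := by
  have := c.isLt
  induction k generalizing c with
  | zero => exact commute_e_e_succ ⟨a, by omega⟩ a c rfl hc
  | succ k ih =>
    -- `ε_c` is the conjugate of `ε_{c-1}` by `σ_{c-1}⁻¹`, which commutes with `ε_a`.
    let i : Fin (n - 1) := ⟨c - 1, by omega⟩
    let c' : Fin n := ⟨c - 1, by omega⟩
    have hc' := SemiconjBy.units_inv_symm_left (a := sUnit i)
      (semiconjBy_s_e_upper i c' c rfl (by simp [i]; omega))
    have ha := SemiconjBy.units_inv_symm_left (a := sUnit i)
      (commute_e_s_of_ne a i (by simp [i]; omega) (by simp [i]; omega)).symm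
    exact Commute.of_semiconjBy_units ha hc' (ih c' (by simp [c']; omega) (by omega))

theorem commute_e_e (a c : Fin n) : Commute (ibE n a) (ibE n c) := by
  rcases lt_trichotomy a c with h | rfl | h
  · exact commute_e_e_of_val_eq_add (c - a - 1) a c (by rw [Fin.lt_def] at h; omega)
  · exact Commute.refl _
  · exact (commute_e_e_of_val_eq_add (a - c - 1) c a (by rw [Fin.lt_def] at h; omega)).symm

theorem semiconjBy_gen_e {τ : IB n →* PartialInj n}
    (hτs : ∀ i : Fin (n - 1), τ (ibS n i) = swapPI n i)
    (hτsi : ∀ i : Fin (n - 1), τ (ibSi n i) = swapPI n i)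
    (hτe : ∀ a : Fin n, τ (ibE n a) = dropPI n a)
    (g : IBGen n) {c b : Fin n} (h : (τ (gen g)).toFun c = some b) :
    SemiconjBy (gen g) (ibE n c) (ibE n b) := by
  cases g with
  | s i =>
    rw [show gen (.s i) = ibS n i from rfl, hτs, swapPI_toFun, Option.some_inj] at h
    exact h ▸ semiconjBy_s_e i c
  | si i =>
    rw [show gen (.si i) = ibSi n i from rfl, hτsi, swapPI_toFun, Option.some_inj] at h
    exact h ▸ semiconjBy_si_e i c
  | e a =>
    rw [show gen (.e a) = ibE n a from rfl, hτe, dropPI_toFun_eq_some] at h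
    exact h.2 ▸ commute_e_e a c

theorem semiconjBy_e_of_toFun_eq_some {τ : IB n →* PartialInj n}
    (hτs : ∀ i : Fin (n - 1), τ (ibS n i) = swapPI n i)
    (hτsi : ∀ i : Fin (n - 1), τ (ibSi n i) = swapPI n i)
    (hτe : ∀ a : Fin n, τ (ibE n a) = dropPI n a)
    (m : IB n) {a b : Fin n} (h : (τ m).toFun a = some b) :
    SemiconjBy m (ibE n a) (ibE n b) := by
  induction m using IB.induction_on generalizing a b with
  | one =>
    rw [map_one, PartialInj.one_toFun, Option.some_inj] at h
    exact h ▸ SemiconjBy.one_left _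
  | gen_mul g m ih =>
    rw [map_mul, PartialInj.mul_toFun, Option.bind_eq_some_iff] at h
    obtain ⟨c, hc, hgc⟩ := h
    exact (semiconjBy_gen_e hτs hτsi hτe g hgc).mul_left (ih hc)

end IB

/-- In `IB_n`, for the canonical projection
`τ : IB_n → I_n` (determined by `τ(σ_i) = s_i`, `τ(σ_i⁻¹) = s_i`,
`τ(ε_a) = id∖{a}`), an element `m` satisfies `ε_i m = ε_i` if and only if
`m ε_{τ(m)(i)} = ε_{τ(m)(i)}`, whenever `τ(m)(i)` is defined. -/
theorem ib_makanin_condition (n : ℕ) (τ : IB n →* PartialInj n)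
    (hτs : ∀ i : Fin (n - 1), τ (ibS n i) = swapPI n i)
    (hτsi : ∀ i : Fin (n - 1), τ (ibSi n i) = swapPI n i)
    (hτe : ∀ a : Fin n, τ (ibE n a) = dropPI n a)
    (m : IB n) (i j : Fin n) (hij : (τ m).toFun i = some j) :
    ibE n i * m = ibE n i ↔ m * ibE n j = ibE n j := by
  have key := IB.semiconjBy_e_of_toFun_eq_some hτs hτsi hτe m hij
  constructor
  · intro h
    obtain rfl : j = i := eq_of_dropPI_mul_eq (by rw [← hτe, ← map_mul, h]) hij
    rw [key.eq, h]
  · intro h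
    obtain rfl : i = j := eq_of_mul_dropPI_eq (by rw [← hτe, ← map_mul, h]) hij
    rw [← key.eq, h]
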